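/- Let 0 < ϖ < 1/8 be fixed. There is a constant C = C(ϖ) with the following property. Let 1/2 ≤ σ, σ' ≤ 1, let T, T', R, R' ≥ 1, set N₁(R) = max_{r≤R} N(σ,r,T), N₂(R) = ∑_{r≤R} N(σ,r,T), N₁(R') = max_{r'≤R'} N(σ',r',T'), N₂(R') = ∑_{r'≤R'} N(σ',r',T'). Then ∑_{r≤R} ∑_{r'≤R'} N(σ,r,T)·N(σ',r',T')·(ss')^{ϖ−1} ≤ C·{N₁(R)N₂(R)N₁(R')N₂(R')}^{1/2+2ϖ}, where for each pair (r,r') one writes h = gcd(r,r'), s = r/h, s' = r'/h. -/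

import Mathlib

open scoped Classical

/-- `N(σ,χ,T)`: the number of zeros `ρ = β+iγ` of `L(s,χ)` with `β ≥ σ`, `|γ| ≤ T`; for the
trivial character the pole of `ζ(s)` at `s = 1` is counted among the zeros. -/
noncomputable def NchiZeros {r : ℕ} [NeZero r] (σ T : ℝ) (χ : DirichletCharacter ℂ r) : ℕ :=
  Nat.card {s : ℂ | DirichletCharacter.LFunction χ s = 0 ∧ σ ≤ s.re ∧ |s.im| ≤ T} +
    (if χ = 1 ∧ σ ≤ 1 ∧ 0 ≤ T then 1 else 0)

/-- `N(σ,r,T) = ∑_χ N(σ,χ,T)`, the sum over all primitive characters `χ` of conductor `r`. -/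
noncomputable def NZeros (σ : ℝ) (r : ℕ) (T : ℝ) : ℕ :=
  if h : r = 0 then 0 else
    haveI : NeZero r := ⟨h⟩
    ∑ᶠ χ : DirichletCharacter ℂ r, if χ.IsPrimitive then NchiZeros σ T χ else 0

/-- `N₁(R) = max_{r ≤ R} N(σ,r,T)`. -/
noncomputable def Nmax (σ T R : ℝ) : ℕ := (Finset.Icc 1 ⌊R⌋₊).sup (fun r => NZeros σ r T)

/-- `N₂(R) = ∑_{r ≤ R} N(σ,r,T)`. -/
noncomputable def Nsum (σ T R : ℝ) : ℕ := ∑ r ∈ Finset.Icc 1 ⌊R⌋₊, NZeros σ r T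

/-! By Cauchy–Schwarz over the pairs `(r, r')` of moduli carrying zeros, the square of the sum is
at most `∑_r N(r)² ∑_{r'} (ss')^{ϖ-1}` times its mirror image. For fixed `r ≠ 0` the map
`r' ↦ (s, s')` is injective, so Hölder's inequality with exponent `p = 1/(1-2ϖ)` bounds the inner
sum by `ζ((1-ϖ)/(1-2ϖ))² · K'^{2ϖ}`, where `K'` is the number of moduli `r'` carrying zeros; and
`K' ≤ ∑_{r'} N(r')² ≤ N₁(R')N₂(R')`. -/

open Finset

noncomputable def pairWeight (ϖ : ℝ) (r r' : ℕ) : ℝ :=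
  (((r / r.gcd r') * (r' / r.gcd r') : ℕ) : ℝ) ^ (ϖ - 1)

lemma pairWeight_nonneg (ϖ : ℝ) (r r' : ℕ) : 0 ≤ pairWeight ϖ r r' :=
  Real.rpow_nonneg (Nat.cast_nonneg _) _

lemma pairWeight_comm (ϖ : ℝ) (r r' : ℕ) : pairWeight ϖ r r' = pairWeight ϖ r' r := by
  rw [pairWeight, pairWeight, Nat.gcd_comm, Nat.mul_comm]

lemma injective_div_gcd {r : ℕ} (hr : r ≠ 0) :
    Function.Injective fun r' : ℕ => (r / r.gcd r', r' / r.gcd r') := by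
  intro x y hxy
  simp only [Prod.mk.injEq] at hxy
  have hgcd : r.gcd x = r.gcd y := by
    rw [← Nat.div_div_self (Nat.gcd_dvd_left r x) hr, ← Nat.div_div_self (Nat.gcd_dvd_left r y) hr,
      hxy.1]
  rw [← Nat.mul_div_cancel' (Nat.gcd_dvd_right r x), ← Nat.mul_div_cancel' (Nat.gcd_dvd_right r y),
    hxy.2, hgcd]

lemma hasSum_natCast_mul_rpow {e : ℝ} (he : e < -1) :
    HasSum (fun q : ℕ × ℕ => (((q.1 * q.2 : ℕ) : ℝ)) ^ e) ((∑' n : ℕ, (n : ℝ) ^ e) ^ 2) := by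
  have hs := Real.summable_nat_rpow.2 he
  have hnonneg : 0 ≤ fun n : ℕ => (n : ℝ) ^ e := fun n => Real.rpow_nonneg (Nat.cast_nonneg n) e
  have hprod := hs.mul_of_nonneg hs hnonneg hnonneg
  simp_rw [Nat.cast_mul, Real.mul_rpow (Nat.cast_nonneg _) (Nat.cast_nonneg _)]
  rw [sq, hs.tsum_mul_tsum hs hprod]
  exact hprod.hasSum

/-- `ζ((1-ϖ)/(1-2ϖ))`: the exponent is `(ϖ-1)p` for the Hölder exponent `p = 1/(1-2ϖ)`. -/
noncomputable def holderZeta (ϖ : ℝ) : ℝ := ∑' n : ℕ, (n : ℝ) ^ ((ϖ - 1) / (1 - 2 * ϖ))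

section HolderZeta

variable {ϖ : ℝ} (hϖ : 0 < ϖ) (hϖ' : ϖ < 1 / 2)
include hϖ hϖ'

lemma holderExponent_lt_neg_one : (ϖ - 1) / (1 - 2 * ϖ) < -1 := by
  rw [div_lt_iff₀ (by linarith)]
  linarith

lemma one_le_holderZeta : 1 ≤ holderZeta ϖ := by
  have h := (Real.summable_nat_rpow.2 (holderExponent_lt_neg_one hϖ hϖ')).le_tsum 1
    fun n _ => Real.rpow_nonneg (Nat.cast_nonneg n) _
  simpa [holderZeta] using h

lemma sum_pairWeight_le {r : ℕ} (hr : r ≠ 0) (S : Finset ℕ) :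
    ∑ r' ∈ S, pairWeight ϖ r r' ≤ holderZeta ϖ ^ 2 * (#S : ℝ) ^ (2 * ϖ) := by
  set p : ℝ := (1 - 2 * ϖ)⁻¹
  have hp : 1 ≤ p := (one_le_inv₀ (by linarith)).2 (by linarith)
  have hsum_pow : ∑ r' ∈ S, pairWeight ϖ r r' ^ p ≤ holderZeta ϖ ^ 2 := by
    simp_rw [pairWeight, ← Real.rpow_mul (Nat.cast_nonneg _), p, ← div_eq_mul_inv]
    rw [← sum_image (f := fun q : ℕ × ℕ => (((q.1 * q.2 : ℕ) : ℝ)) ^ ((ϖ - 1) / (1 - 2 * ϖ)))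
      (injective_div_gcd hr).injOn]
    exact sum_le_hasSum _ (fun _ _ => Real.rpow_nonneg (Nat.cast_nonneg _) _)
      (hasSum_natCast_mul_rpow (holderExponent_lt_neg_one hϖ hϖ'))
  have holder := Real.inner_le_weight_mul_Lp_of_nonneg S hp (fun _ => 1) (pairWeight ϖ r)
    (fun _ => zero_le_one) (pairWeight_nonneg ϖ r)
  have hexp : 1 - p⁻¹ = 2 * ϖ := by rw [inv_inv]; ring
  simp only [one_mul, sum_const, nsmul_eq_mul, mul_one, hexp] at holder
  have hZ : 1 ≤ holderZeta ϖ ^ 2 := one_le_pow₀ (one_le_holderZeta hϖ hϖ')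
  calc ∑ r' ∈ S, pairWeight ϖ r r'
      ≤ (#S : ℝ) ^ (2 * ϖ) * (∑ r' ∈ S, pairWeight ϖ r r' ^ p) ^ p⁻¹ := holder
    _ ≤ (#S : ℝ) ^ (2 * ϖ) * (holderZeta ϖ ^ 2) ^ (1 : ℝ) := by
        refine mul_le_mul_of_nonneg_left ?_ (by positivity)
        have hsum_nonneg : 0 ≤ ∑ r' ∈ S, pairWeight ϖ r r' ^ p :=
          sum_nonneg fun _ _ => Real.rpow_nonneg (pairWeight_nonneg ϖ r _) _
        exact (Real.rpow_le_rpow hsum_nonneg hsum_pow (inv_nonneg.2 (zero_le_one.trans hp))).trans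
          (Real.rpow_le_rpow_of_exponent_le hZ (inv_le_one_of_one_le₀ hp))
    _ = holderZeta ϖ ^ 2 * (#S : ℝ) ^ (2 * ϖ) := by rw [Real.rpow_one, mul_comm]

lemma sum_sum_sq_mul_pairWeight_le {A : Finset ℕ} (hA : 0 ∉ A) (A' : Finset ℕ) (a : ℕ → ℝ) :
    ∑ r ∈ A, ∑ r' ∈ A', a r ^ 2 * pairWeight ϖ r r' ≤
      holderZeta ϖ ^ 2 * (∑ r ∈ A, a r ^ 2) * (#A' : ℝ) ^ (2 * ϖ) := by
  simp_rw [← mul_sum]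
  calc ∑ r ∈ A, a r ^ 2 * ∑ r' ∈ A', pairWeight ϖ r r'
      ≤ ∑ r ∈ A, a r ^ 2 * (holderZeta ϖ ^ 2 * (#A' : ℝ) ^ (2 * ϖ)) := by
        gcongr with r hr
        exact sum_pairWeight_le hϖ hϖ' (ne_of_mem_of_not_mem hr hA) A'
    _ = holderZeta ϖ ^ 2 * (∑ r ∈ A, a r ^ 2) * (#A' : ℝ) ^ (2 * ϖ) := by
        rw [← sum_mul]; ring

end HolderZeta

lemma sq_sum_sum_mul_mul_le {ι κ : Type*} (s : Finset ι) (t : Finset κ) (a : ι → ℝ) (b : κ → ℝ)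
    {w : ι → κ → ℝ} (hw : ∀ i j, 0 ≤ w i j) :
    (∑ i ∈ s, ∑ j ∈ t, a i * b j * w i j) ^ 2 ≤
      (∑ i ∈ s, ∑ j ∈ t, a i ^ 2 * w i j) * ∑ i ∈ s, ∑ j ∈ t, b j ^ 2 * w i j := by
  simp only [← sum_product']
  exact sum_sq_le_sum_mul_sum_of_sq_le_mul _ (fun _ _ => mul_nonneg (sq_nonneg _) (hw _ _))
    (fun _ _ => mul_nonneg (sq_nonneg _) (hw _ _)) (fun _ _ => le_of_eq (by ring))

lemma card_le_sum_sq {α : Type*} {s : Finset α} {f : α → ℕ} (hf : ∀ x ∈ s, f x ≠ 0) :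
    #s ≤ ∑ x ∈ s, f x ^ 2 := by
  rw [card_eq_sum_ones]
  exact sum_le_sum fun x hx => Nat.one_le_pow _ _ (Nat.pos_of_ne_zero (hf x hx))

lemma sum_sq_le_sup_mul_sum {α : Type*} (s : Finset α) (f : α → ℕ) :
    ∑ x ∈ s, f x ^ 2 ≤ s.sup f * ∑ x ∈ s, f x := by
  rw [mul_sum]
  exact sum_le_sum fun x hx => by rw [sq]; exact Nat.mul_le_mul_right _ (le_sup hx)

lemma sum_sum_eq_sum_sum_filter_ne_zero {α β : Type*} (s : Finset α) (t : Finset β)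
    (f : α → ℕ) (g : β → ℕ) (w : α → β → ℝ) :
    ∑ x ∈ s, ∑ y ∈ t, (f x : ℝ) * g y * w x y =
      ∑ x ∈ s with f x ≠ 0, ∑ y ∈ t with g y ≠ 0, (f x : ℝ) * g y * w x y := by
  rw [sum_filter_of_ne fun x _ h hx => by simp [hx] at h]
  exact sum_congr rfl fun x _ => (sum_filter_of_ne fun y _ h hy => by simp [hy] at h).symm

lemma natCast_rpow_le_natCast_rpow {m n : ℕ} (hmn : m ≤ n) {a b : ℝ} (ha : 0 < a) (hab : a ≤ b) :
    (m : ℝ) ^ a ≤ (n : ℝ) ^ b := by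
  rcases Nat.eq_zero_or_pos m with rfl | hm
  · rw [Nat.cast_zero, Real.zero_rpow ha.ne']
    positivity
  · calc (m : ℝ) ^ a ≤ (n : ℝ) ^ a := by gcongr
      _ ≤ (n : ℝ) ^ b := Real.rpow_le_rpow_of_exponent_le (by exact_mod_cast hm.trans_le hmn) hab

section PairSum

variable {ϖ : ℝ} (hϖ : 0 < ϖ) (hϖ' : ϖ < 1 / 2)
include hϖ hϖ'

lemma pair_sum_le_of_ne_zero {A A' : Finset ℕ} (hA : 0 ∉ A) (hA' : 0 ∉ A') {N N' : ℕ → ℕ}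
    (hN : ∀ r ∈ A, N r ≠ 0) (hN' : ∀ r' ∈ A', N' r' ≠ 0) :
    ∑ r ∈ A, ∑ r' ∈ A', (N r : ℝ) * N' r' * pairWeight ϖ r r' ≤
      holderZeta ϖ ^ 2 *
        ((∑ r ∈ A, (N r : ℝ) ^ 2) * ∑ r' ∈ A', (N' r' : ℝ) ^ 2) ^ (1 / 2 + ϖ) := by
  have hcard : (#A : ℝ) ≤ ∑ r ∈ A, (N r : ℝ) ^ 2 := by exact_mod_cast card_le_sum_sq hN
  have hcard' : (#A' : ℝ) ≤ ∑ r' ∈ A', (N' r' : ℝ) ^ 2 := by exact_mod_cast card_le_sum_sq hN'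
  set Q := ∑ r ∈ A, (N r : ℝ) ^ 2
  set Q' := ∑ r' ∈ A', (N' r' : ℝ) ^ 2
  have hQ : 0 ≤ Q := sum_nonneg fun _ _ => sq_nonneg _
  have hQ' : 0 ≤ Q' := sum_nonneg fun _ _ => sq_nonneg _
  have hleft : ∑ r ∈ A, ∑ r' ∈ A', (N r : ℝ) ^ 2 * pairWeight ϖ r r' ≤
      holderZeta ϖ ^ 2 * Q * Q' ^ (2 * ϖ) :=
    (sum_sum_sq_mul_pairWeight_le hϖ hϖ' hA A' _).trans (by gcongr)
  have hright : ∑ r ∈ A, ∑ r' ∈ A', (N' r' : ℝ) ^ 2 * pairWeight ϖ r r' ≤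
      holderZeta ϖ ^ 2 * Q' * Q ^ (2 * ϖ) := by
    rw [sum_comm]
    simp_rw [pairWeight_comm ϖ _ _]
    exact (sum_sum_sq_mul_pairWeight_le hϖ hϖ' hA' A _).trans (by gcongr)
  have hsq : (holderZeta ϖ ^ 2 * Q * Q' ^ (2 * ϖ)) * (holderZeta ϖ ^ 2 * Q' * Q ^ (2 * ϖ)) =
      (holderZeta ϖ ^ 2 * (Q * Q') ^ (1 / 2 + ϖ)) ^ 2 := by
    rw [mul_pow, ← Real.rpow_mul_natCast (mul_nonneg hQ hQ'),
      show (1 / 2 + ϖ) * ((2 : ℕ) : ℝ) = 1 + 2 * ϖ by push_cast; ring,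
      Real.rpow_one_add' (mul_nonneg hQ hQ') (by linarith), Real.mul_rpow hQ hQ']
    ring
  refine le_of_pow_le_pow_left₀ two_ne_zero (by positivity) ?_
  calc _ ≤ _ := sq_sum_sum_mul_mul_le A A' (fun r => (N r : ℝ)) (fun r' => (N' r' : ℝ))
        (pairWeight_nonneg ϖ)
    _ ≤ _ := mul_le_mul hleft hright (sum_nonneg fun _ _ => sum_nonneg fun _ _ =>
        mul_nonneg (sq_nonneg _) (pairWeight_nonneg ϖ _ _)) (by positivity)
    _ = _ := hsq

lemma pair_sum_le {A A' : Finset ℕ} (hA : 0 ∉ A) (hA' : 0 ∉ A') (N N' : ℕ → ℕ) :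
    ∑ r ∈ A, ∑ r' ∈ A', (N r : ℝ) * N' r' * pairWeight ϖ r r' ≤
      holderZeta ϖ ^ 2 *
        ((A.sup N * (∑ r ∈ A, N r) * A'.sup N' * ∑ r' ∈ A', N' r' : ℕ) : ℝ) ^ (1 / 2 + 2 * ϖ) := by
  have hQ : ∑ r ∈ A with N r ≠ 0, N r ^ 2 ≤ A.sup N * ∑ r ∈ A, N r :=
    (sum_le_sum_of_subset (filter_subset _ _)).trans (sum_sq_le_sup_mul_sum A N)
  have hQ' : ∑ r' ∈ A' with N' r' ≠ 0, N' r' ^ 2 ≤ A'.sup N' * ∑ r' ∈ A', N' r' :=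
    (sum_le_sum_of_subset (filter_subset _ _)).trans (sum_sq_le_sup_mul_sum A' N')
  have hM : (∑ r ∈ A with N r ≠ 0, N r ^ 2) * ∑ r' ∈ A' with N' r' ≠ 0, N' r' ^ 2 ≤
      A.sup N * (∑ r ∈ A, N r) * A'.sup N' * ∑ r' ∈ A', N' r' :=
    (Nat.mul_le_mul hQ hQ').trans_eq (by ring)
  rw [sum_sum_eq_sum_sum_filter_ne_zero]
  refine (pair_sum_le_of_ne_zero hϖ hϖ' (fun h => hA (mem_filter.1 h).1)
    (fun h => hA' (mem_filter.1 h).1) (fun r hr => (mem_filter.1 hr).2)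
    (fun r' hr' => (mem_filter.1 hr').2)).trans ?_
  gcongr
  convert natCast_rpow_le_natCast_rpow hM (a := 1 / 2 + ϖ) (b := 1 / 2 + 2 * ϖ) (by linarith)
    (by linarith) using 2
  all_goals push_cast; rfl

end PairSum

theorem zero_density_pair_sum_bound (ϖ : ℝ) (hϖ : 0 < ϖ) (hϖ' : ϖ < 1 / 8) :
    ∃ C : ℝ, 0 < C ∧ ∀ σ σ' T T' R R' : ℝ,
      1 / 2 ≤ σ → σ ≤ 1 → 1 / 2 ≤ σ' → σ' ≤ 1 →
      1 ≤ T → 1 ≤ T' → 1 ≤ R → 1 ≤ R' →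
      (∑ r ∈ Finset.Icc 1 ⌊R⌋₊, ∑ r' ∈ Finset.Icc 1 ⌊R'⌋₊,
          (NZeros σ r T : ℝ) * (NZeros σ' r' T' : ℝ) *
            (((r / r.gcd r') * (r' / r.gcd r') : ℕ) : ℝ) ^ (ϖ - 1)) ≤
        C * ((Nmax σ T R * Nsum σ T R * Nmax σ' T' R' * Nsum σ' T' R' : ℕ) : ℝ) ^
          (1 / 2 + 2 * ϖ) := by
  have hϖ_half : ϖ < 1 / 2 := by linarith
  refine ⟨holderZeta ϖ ^ 2, pow_pos (one_pos.trans_le (one_le_holderZeta hϖ hϖ_half)) 2, ?_⟩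
  intro σ σ' T T' R R' _ _ _ _ _ _ _ _
  exact pair_sum_le hϖ hϖ_half (by simp) (by simp)
    (fun r => NZeros σ r T) (fun r' => NZeros σ' r' T')
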